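/- Every Lagrangian W of V contains a nonzero polynomial of the form (bX−aY)²(dX−cY) with [a:b] ≠ [c:d] in ℂℙ¹, i.e. a cubic having a double root and a distinct simple root. -/

import Mathlib

noncomputable section

open MvPolynomial

/-- The polynomial ring `ℂ[X,Y]`. -/
abbrev P2 : Type := MvPolynomial (Fin 2) ℂ

/-- The variable `X`. -/
def Xv : P2 := X 0

/-- The variable `Y`. -/
def Yv : P2 := X 1

/-- `V`: the space of homogeneous cubic polynomials in `X, Y`. -/
def Vcubic : Submodule ℂ P2 := homogeneousSubmodule (Fin 2) ℂ 3

/-- The coefficient of `X^i Y^j`. -/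
def cf (i j : ℕ) (p : P2) : ℂ := coeff (Finsupp.single 0 i + Finsupp.single 1 j) p

/-- The alternating bilinear form `ω` with `ω(X³,Y³) = 1`, `ω(X²Y,XY²) = -1/3`,
all other pairings of distinct basis vectors being `0`. -/
def omegaForm (p q : P2) : ℂ :=
  cf 3 0 p * cf 0 3 q - cf 0 3 p * cf 3 0 q
    - (1 / 3) * (cf 2 1 p * cf 1 2 q - cf 1 2 p * cf 2 1 q)

/-- The linear form `b X - a Y` associated to the point `[a : b] ∈ ℂℙ¹`. -/
def lf (a b : ℂ) : P2 := C b * Xv - C a * Yv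

/-- A Lagrangian of `V`: a 2-dimensional subspace contained in `V` on which `ω` vanishes. -/
def IsLagrangian (W : Submodule ℂ P2) : Prop :=
  W ≤ Vcubic ∧ Module.finrank ℂ W = 2 ∧ ∀ p ∈ W, ∀ q ∈ W, omegaForm p q = 0

/-- A perfect cube: a nonzero element of the form `c • (bX - aY)³`. -/
def IsPerfectCube (p : P2) : Prop :=
  ∃ c a b : ℂ, c ≠ 0 ∧ (a ≠ 0 ∨ b ≠ 0) ∧ p = C c * lf a b ^ 3

/-- The action of `SL(2,ℂ)` on `ℂ[X,Y]` by linear substitution of the variables. -/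
def subst (g : Matrix.SpecialLinearGroup (Fin 2) ℂ) : P2 →ₐ[ℂ] P2 :=
  aeval (fun i => C (g.1 i 0) * Xv + C (g.1 i 1) * Yv)

/-- The induced action of `SL(2,ℂ)` on subspaces of `ℂ[X,Y]`. -/
def mapAct (g : Matrix.SpecialLinearGroup (Fin 2) ℂ) (W : Submodule ℂ P2) :
    Submodule ℂ P2 :=
  W.map (subst g).toLinearMap

/-- The `SL(2,ℂ)`-orbit of a subspace. -/
def slOrbit (W₀ : Submodule ℂ P2) : Set (Submodule ℂ P2) := {W | ∃ g, W = mapAct g W₀}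

/-!
A pencil of binary cubics contains a nonzero member with vanishing discriminant, since the
discriminant is a binary quartic in the pencil parameters; such a member is `l² m`. If `l` and `m`
are independent we are done. Otherwise `W` contains a cube `l³`. As `ω(l³, q)` is the value of `q`
at the root of `l`, isotropy makes every `q ∈ W` divisible by `l`, say `q = l Q`, and
`disc (Q + t l²) = disc Q - 4 t Q(root of l)` vanishes for a suitable `t` unless `l ∣ Q` already;
either way `t l³ + q ∈ W` has the form `l'² m'`. Finally `m'` is independent of `l'`: otherwise
`t l³ + q` would be a second cube in `W`, but two non-proportional cubes `l³, l'³` have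
`ω(l³, l'³) ≠ 0`, so it would be a multiple of `l³`, contradicting the choice of `q`.
-/

def ofCubic (P : Cubic ℂ) : P2 :=
  C P.a * Xv ^ 3 + C P.b * (Xv ^ 2 * Yv) + C P.c * (Xv * Yv ^ 2) + C P.d * Yv ^ 3

def toCubic (f : P2) : Cubic ℂ := ⟨cf 3 0 f, cf 2 1 f, cf 1 2 f, cf 0 3 f⟩

def quad (u v w : ℂ) : P2 := C u * Xv ^ 2 + C v * (Xv * Yv) + C w * Yv ^ 2

@[simp] lemma cf_add (i j : ℕ) (p q : P2) : cf i j (p + q) = cf i j p + cf i j q :=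
  coeff_add _ _ _

@[simp] lemma cf_smul (i j : ℕ) (c : ℂ) (p : P2) : cf i j (c • p) = c * cf i j p :=
  coeff_smul _ _ _

lemma cf_C_mul_Xv_pow_mul_Yv_pow (i j k l : ℕ) (c : ℂ) :
    cf i j (C c * (Xv ^ k * Yv ^ l)) = if k = i ∧ l = j then c else 0 := by
  simp [cf, Xv, Yv, X_pow_eq_monomial, monomial_mul, C_mul_monomial, coeff_monomial,
    Finsupp.ext_iff, Fin.forall_fin_two]

@[simp] lemma toCubic_ofCubic (P : Cubic ℂ) : toCubic (ofCubic P) = P := by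
  have e : ofCubic P = C P.a * (Xv ^ 3 * Yv ^ 0) + C P.b * (Xv ^ 2 * Yv ^ 1)
      + C P.c * (Xv ^ 1 * Yv ^ 2) + C P.d * (Xv ^ 0 * Yv ^ 3) := by
    simp [ofCubic]
  rw [e]
  simp only [toCubic, cf_add, cf_C_mul_Xv_pow_mul_Yv_pow]
  simp

lemma ofCubic_mem_Vcubic (P : Cubic ℂ) : ofCubic P ∈ Vcubic := by
  simp only [Vcubic, mem_homogeneousSubmodule, ofCubic, Xv, Yv]
  refine (((?_ : IsHomogeneous _ 3).add ?_).add ?_).add ?_ <;> refine IsHomogeneous.C_mul ?_ _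
  · exact isHomogeneous_X_pow _ _
  · exact (isHomogeneous_X_pow _ 2).mul (isHomogeneous_X _ _)
  · exact (isHomogeneous_X _ _).mul (isHomogeneous_X_pow _ 2)
  · exact isHomogeneous_X_pow _ _

lemma Finsupp.eq_single_zero_add_single_one {M : Type*} [AddZeroClass M] (d : Fin 2 →₀ M) :
    d = Finsupp.single 0 (d 0) + Finsupp.single 1 (d 1) := by
  ext i
  fin_cases i <;> simp

lemma ofCubic_toCubic {f : P2} (hf : f ∈ Vcubic) : ofCubic (toCubic f) = f := by
  have hP := ofCubic_mem_Vcubic (toCubic f)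
  simp only [Vcubic, mem_homogeneousSubmodule] at hf hP
  have hcf := toCubic_ofCubic (toCubic f)
  simp only [toCubic, Cubic.mk.injEq] at hcf
  obtain ⟨_, _, _, _⟩ := hcf
  ext d
  by_cases hd : d 0 + d 1 = 3
  · rw [d.eq_single_zero_add_single_one, show d 1 = 3 - d 0 by omega]
    have h0 : d 0 ≤ 3 := by omega
    interval_cases d 0 <;> assumption
  · have hdeg : d.degree ≠ 3 := by rwa [Finsupp.degree_eq_sum, Fin.sum_univ_two]
    rw [hf.coeff_eq_zero hdeg, hP.coeff_eq_zero hdeg]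

@[simp] lemma eval_lf (x y a b : ℂ) : eval ![x, y] (lf a b) = b * x - a * y := by
  simp [lf, Xv, Yv]

@[simp] lemma eval_ofCubic (x y : ℂ) (P : Cubic ℂ) :
    eval ![x, y] (ofCubic P) = P.a * x ^ 3 + P.b * x ^ 2 * y + P.c * x * y ^ 2 + P.d * y ^ 3 := by
  simp [ofCubic, Xv, Yv]
  ring

@[simp] lemma eval_quad (x y u v w : ℂ) :
    eval ![x, y] (quad u v w) = u * x ^ 2 + v * x * y + w * y ^ 2 := by
  simp [quad, Xv, Yv]
  ring

lemma C_mul_lf (k a b : ℂ) : C k * lf a b = lf (k * a) (k * b) := by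
  simp only [lf, map_mul]
  ring

lemma lf_mul_lf (a b c d : ℂ) : lf a b * lf c d = quad (b * d) (-(b * c) - a * d) (a * c) := by
  simp only [lf, quad, map_mul, map_sub, map_neg]
  ring

lemma C_mul_lf_sq (k a b : ℂ) :
    C k * lf a b ^ 2 = quad (k * b ^ 2) (-(2 * k * a * b)) (k * a ^ 2) := by
  simp only [lf, quad, map_mul, map_neg, map_pow, map_ofNat]
  ring

lemma lf_mul_quad (a b u v w : ℂ) :
    lf a b * quad u v w = ofCubic ⟨b * u, b * v - a * u, b * w - a * v, -(a * w)⟩ := by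
  simp only [lf, quad, ofCubic, map_mul, map_sub, map_neg]
  ring

lemma lf_pow_three (a b : ℂ) :
    lf a b ^ 3 = ofCubic ⟨b ^ 3, -(3 * a * b ^ 2), 3 * a ^ 2 * b, -a ^ 3⟩ := by
  simp only [lf, ofCubic, map_neg, map_mul, map_pow, map_ofNat]
  ring

lemma quad_add (u v w u' v' w' : ℂ) :
    quad u v w + quad u' v' w' = quad (u + u') (v + v') (w + w') := by
  simp only [quad, map_add]
  ring

lemma lf_ne_zero {a b : ℂ} (hab : a ≠ 0 ∨ b ≠ 0) : lf a b ≠ 0 := by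
  intro h
  have h10 := congrArg (eval ![1, 0]) h
  have h01 := congrArg (eval ![0, 1]) h
  simp only [eval_lf, map_zero, mul_one, mul_zero, sub_zero, zero_sub, neg_eq_zero] at h10 h01
  exact hab.elim (· h01) (· h10)

lemma exists_lf_eq_C_mul_lf {a b c d : ℂ} (hab : a ≠ 0 ∨ b ≠ 0) (h : a * d - b * c = 0) :
    ∃ k, lf c d = C k * lf a b := by
  rcases hab with ha | hb
  · exact ⟨c / a, by rw [C_mul_lf]; congr 1 <;> field_simp; linear_combination h⟩
  · exact ⟨d / b, by rw [C_mul_lf]; congr 1 <;> field_simp; linear_combination -h⟩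

lemma exists_eval_eq_zero_of_mem_Vcubic {f : P2} (hf : f ∈ Vcubic) :
    ∃ a b : ℂ, (a ≠ 0 ∨ b ≠ 0) ∧ eval ![a, b] f = 0 := by
  obtain ⟨P, rfl⟩ : ∃ P, ofCubic P = f := ⟨_, ofCubic_toCubic hf⟩
  by_cases ha : P.a = 0
  · exact ⟨1, 0, by simp, by simp [ha]⟩
  · obtain ⟨r, hr⟩ := Complex.exists_root (f := P.toPoly)
      (by rw [P.degree_of_a_ne_zero ha]; norm_num)
    refine ⟨r, 1, by simp, ?_⟩
    simpa [Cubic.toPoly] using hr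

lemma exists_eval_quad_eq_zero (u v w : ℂ) :
    ∃ a b : ℂ, (a ≠ 0 ∨ b ≠ 0) ∧ eval ![a, b] (quad u v w) = 0 := by
  by_cases hu : u = 0
  · exact ⟨1, 0, by simp, by simp [hu]⟩
  · obtain ⟨r, hr⟩ := exists_quadratic_eq_zero (b := v) (c := w) hu
      (IsAlgClosed.exists_eq_mul_self _)
    exact ⟨r, 1, by simp, by simp only [eval_quad]; linear_combination hr⟩

lemma exists_eq_lf_mul_quad {f : P2} (hf : f ∈ Vcubic) {a b : ℂ} (hab : a ≠ 0 ∨ b ≠ 0)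
    (h : eval ![a, b] f = 0) : ∃ u v w, f = lf a b * quad u v w := by
  obtain ⟨P, rfl⟩ : ∃ P, ofCubic P = f := ⟨_, ofCubic_toCubic hf⟩
  rw [eval_ofCubic] at h
  rcases hab with ha | hb
  · refine ⟨-(P.b * a ^ 2 + P.c * a * b + P.d * b ^ 2) / a ^ 3, -(P.c * a + P.d * b) / a ^ 2,
      -P.d / a, ?_⟩
    rw [lf_mul_quad]
    congr 1
    ext <;> field_simp <;> grind
  · refine ⟨P.a / b, (P.a * a + P.b * b) / b ^ 2,
      (P.a * a ^ 2 + P.b * a * b + P.c * b ^ 2) / b ^ 3, ?_⟩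
    rw [lf_mul_quad]
    congr 1
    ext <;> field_simp <;> grind

lemma exists_quad_eq_lf_mul_lf {a b u v w : ℂ} (hab : a ≠ 0 ∨ b ≠ 0)
    (h : eval ![a, b] (quad u v w) = 0) : ∃ c d, quad u v w = lf a b * lf c d := by
  rw [eval_quad] at h
  rcases hab with ha | hb
  · refine ⟨w / a, -(v * a + w * b) / a ^ 2, ?_⟩
    rw [lf_mul_lf]
    congr 1 <;> field_simp <;> grind
  · refine ⟨-(u * a + v * b) / b ^ 2, u / b, ?_⟩
    rw [lf_mul_lf]
    congr 1 <;> field_simp <;> grind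

lemma discr_toCubic_lf_mul_lf_mul_lf (a₁ b₁ a₂ b₂ a₃ b₃ : ℂ) :
    (toCubic (lf a₁ b₁ * (lf a₂ b₂ * lf a₃ b₃))).discr
      = ((a₁ * b₂ - b₁ * a₂) * (a₁ * b₃ - b₁ * a₃) * (a₂ * b₃ - b₂ * a₃)) ^ 2 := by
  rw [lf_mul_lf, lf_mul_quad, toCubic_ofCubic, Cubic.discr]
  ring

lemma exists_eq_lf_sq_mul_lf_of_discr_eq_zero {f : P2} (hf : f ∈ Vcubic)
    (h : (toCubic f).discr = 0) : ∃ a b c d, (a ≠ 0 ∨ b ≠ 0) ∧ f = lf a b ^ 2 * lf c d := by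
  obtain ⟨a₁, b₁, h₁, hr₁⟩ := exists_eval_eq_zero_of_mem_Vcubic hf
  obtain ⟨u, v, w, hfq⟩ := exists_eq_lf_mul_quad hf h₁ hr₁
  obtain ⟨a₂, b₂, h₂, hr₂⟩ := exists_eval_quad_eq_zero u v w
  obtain ⟨a₃, b₃, hq⟩ := exists_quad_eq_lf_mul_lf h₂ hr₂
  rw [hq] at hfq
  rw [hfq, discr_toCubic_lf_mul_lf_mul_lf, sq_eq_zero_iff, mul_eq_zero, mul_eq_zero] at h
  rcases h with (h₁₂ | h₁₃) | h₂₃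
  · obtain ⟨k, hk⟩ := exists_lf_eq_C_mul_lf h₁ h₁₂
    exact ⟨a₁, b₁, k * a₃, k * b₃, h₁, by rw [hfq, hk, ← C_mul_lf]; ring⟩
  · obtain ⟨k, hk⟩ := exists_lf_eq_C_mul_lf h₁ h₁₃
    exact ⟨a₁, b₁, k * a₂, k * b₂, h₁, by rw [hfq, hk, ← C_mul_lf]; ring⟩
  · obtain ⟨k, hk⟩ := exists_lf_eq_C_mul_lf h₂ h₂₃
    exact ⟨a₂, b₂, k * a₁, k * b₁, h₂, by rw [hfq, hk, ← C_mul_lf]; ring⟩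

lemma exists_quad_eq_C_mul_lf_sq_of_discrim_eq_zero {u v w : ℂ} (h : discrim u v w = 0) :
    ∃ k a b, (a ≠ 0 ∨ b ≠ 0) ∧ quad u v w = C k * lf a b ^ 2 := by
  rw [discrim] at h
  by_cases hu : u = 0
  · have hv : v = 0 := by simpa [hu] using h
    refine ⟨w, 1, 0, by simp, ?_⟩
    rw [C_mul_lf_sq, hu, hv]
    congr 1 <;> ring
  · refine ⟨u, -(v / (2 * u)), 1, by simp, ?_⟩
    rw [C_mul_lf_sq]
    congr 1 <;> field_simp
    linear_combination -h

lemma exists_C_mul_lf_pow_three_add_lf_mul_quad_eq {a b : ℂ} (hab : a ≠ 0 ∨ b ≠ 0)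
    (u v w : ℂ) : ∃ t a' b' c' d', (a' ≠ 0 ∨ b' ≠ 0) ∧
      C t * lf a b ^ 3 + lf a b * quad u v w = lf a' b' ^ 2 * lf c' d' := by
  by_cases hQ : eval ![a, b] (quad u v w) = 0
  · obtain ⟨c, d, hq⟩ := exists_quad_eq_lf_mul_lf hab hQ
    exact ⟨0, a, b, c, d, hab, by rw [hq, map_zero]; ring⟩
  · set t := discrim u v w / (4 * eval ![a, b] (quad u v w))
    have hdisc : discrim (t * b ^ 2 + u) (-(2 * t * a * b) + v) (t * a ^ 2 + w) = 0 := by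
      have hshift : discrim (t * b ^ 2 + u) (-(2 * t * a * b) + v) (t * a ^ 2 + w)
          = discrim u v w - 4 * t * eval ![a, b] (quad u v w) := by
        simp only [discrim, eval_quad]
        ring
      rw [hshift]
      simp only [t]
      field_simp
      ring
    obtain ⟨k, a', b', hab', hk⟩ := exists_quad_eq_C_mul_lf_sq_of_discrim_eq_zero hdisc
    refine ⟨t, a', b', k * a, k * b, hab', ?_⟩
    calc C t * lf a b ^ 3 + lf a b * quad u v w
        = lf a b * (C t * lf a b ^ 2 + quad u v w) := by ring
      _ = lf a b * (C k * lf a' b' ^ 2) := by rw [C_mul_lf_sq, quad_add, hk]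
      _ = lf a' b' ^ 2 * lf (k * a) (k * b) := by rw [← C_mul_lf]; ring

lemma Cubic.exists_discr_pencil_eq_zero (P Q : Cubic ℂ) :
    ∃ l m : ℂ, (l ≠ 0 ∨ m ≠ 0) ∧
      (⟨l * P.a + m * Q.a, l * P.b + m * Q.b, l * P.c + m * Q.c, l * P.d + m * Q.d⟩ :
        Cubic ℂ).discr = 0 := by
  by_cases hP : P.discr = 0
  · exact ⟨1, 0, by simp, by simpa using hP⟩
  let D : Polynomial ℂ := (⟨Polynomial.C P.a * Polynomial.X + Polynomial.C Q.a,
    Polynomial.C P.b * Polynomial.X + Polynomial.C Q.b,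
    Polynomial.C P.c * Polynomial.X + Polynomial.C Q.c,
    Polynomial.C P.d * Polynomial.X + Polynomial.C Q.d⟩ : Cubic (Polynomial ℂ)).discr
  -- the leading coefficient of `D` is `P.discr`
  have hD : D.degree = 4 := by
    simp only [D, Cubic.discr]
    compute_degree!
  obtain ⟨r, hr⟩ := Complex.exists_root (f := D) (by rw [hD]; norm_num)
  refine ⟨r, 1, by simp, ?_⟩
  simp [D, Cubic.discr] at hr ⊢
  linear_combination hr

lemma Submodule.exists_linearIndependent_pair_of_finrank_eq_two {K M : Type*} [DivisionRing K]
    [AddCommGroup M] [Module K M] {W : Submodule K M} (hW : Module.finrank K W = 2) {p : M}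
    (hp : p ∈ W) (hp0 : p ≠ 0) : ∃ q ∈ W, LinearIndependent K ![p, q] := by
  obtain ⟨q, hq⟩ := exists_linearIndependent_pair_of_one_lt_finrank (R := K) (M := W)
    (by omega) (x := ⟨p, hp⟩) (by simpa using hp0)
  refine ⟨q, q.2, ?_⟩
  have h := hq.map' W.subtype W.ker_subtype
  rwa [show W.subtype ∘ ![⟨p, hp⟩, q] = ![p, (q : M)] by ext i; fin_cases i <;> rfl] at h

lemma exists_mem_ne_zero_discr_toCubic_eq_zero {W : Submodule ℂ P2}
    (hW : Module.finrank ℂ W = 2) : ∃ f ∈ W, f ≠ 0 ∧ (toCubic f).discr = 0 := by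
  obtain ⟨p, hp, hp0⟩ := W.ne_bot_iff.1 (by rintro rfl; simp at hW)
  obtain ⟨q, hq, hind⟩ := W.exists_linearIndependent_pair_of_finrank_eq_two hW hp hp0
  obtain ⟨l, m, hlm, hd⟩ := (toCubic p).exists_discr_pencil_eq_zero (toCubic q)
  refine ⟨l • p + m • q, W.add_mem (W.smul_mem l hp) (W.smul_mem m hq), fun h0 => ?_, ?_⟩
  · obtain ⟨rfl, rfl⟩ := LinearIndependent.pair_iff.1 hind l m h0
    simp at hlm
  · simpa [toCubic] using hd

lemma omegaForm_eq (p q : P2) :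
    omegaForm p q = (toCubic p).a * (toCubic q).d - (toCubic p).d * (toCubic q).a
      - 1 / 3 * ((toCubic p).b * (toCubic q).c - (toCubic p).c * (toCubic q).b) :=
  rfl

lemma omegaForm_lf_pow_three {q : P2} (hq : q ∈ Vcubic) (a b : ℂ) :
    omegaForm (lf a b ^ 3) q = eval ![a, b] q := by
  obtain ⟨Q, rfl⟩ : ∃ Q, ofCubic Q = q := ⟨_, ofCubic_toCubic hq⟩
  rw [omegaForm_eq, lf_pow_three, toCubic_ofCubic, toCubic_ofCubic, eval_ofCubic]
  ring

namespace IsLagrangian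

lemma exists_eq_C_mul_lf_pow_three {W : Submodule ℂ P2} (hW : IsLagrangian W) {a b : ℂ}
    (hab : a ≠ 0 ∨ b ≠ 0) (hl : lf a b ^ 3 ∈ W) {k c d : ℂ} (hg : C k * lf c d ^ 3 ∈ W) :
    ∃ s, C k * lf c d ^ 3 = C s * lf a b ^ 3 := by
  have h := hW.2.2 _ hl _ hg
  rw [omegaForm_lf_pow_three (hW.1 hg)] at h
  simp only [map_mul, map_pow, eval_C, eval_lf, mul_eq_zero, pow_eq_zero_iff, ne_eq,
    OfNat.ofNat_ne_zero, not_false_eq_true] at h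
  rcases h with rfl | h
  · exact ⟨0, by simp⟩
  · obtain ⟨k', hk'⟩ := exists_lf_eq_C_mul_lf hab (c := c) (d := d) (by linear_combination h)
    exact ⟨k * k' ^ 3, by rw [hk', map_mul, map_pow]; ring⟩

lemma exists_lf_sq_mul_lf_mem_of_lf_pow_three_mem {W : Submodule ℂ P2} (hW : IsLagrangian W)
    {a b : ℂ} (hab : a ≠ 0 ∨ b ≠ 0) (hl : lf a b ^ 3 ∈ W) :
    ∃ a b c d : ℂ, a * d - b * c ≠ 0 ∧ lf a b ^ 2 * lf c d ∈ W := by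
  obtain ⟨q, hqW, hind⟩ := W.exists_linearIndependent_pair_of_finrank_eq_two hW.2.1 hl
    (pow_ne_zero 3 (lf_ne_zero hab))
  have hq : eval ![a, b] q = 0 := by
    rw [← omegaForm_lf_pow_three (hW.1 hqW)]
    exact hW.2.2 _ hl _ hqW
  obtain ⟨u, v, w, rfl⟩ := exists_eq_lf_mul_quad (hW.1 hqW) hab hq
  obtain ⟨t, a', b', c', d', hab', hg⟩ := exists_C_mul_lf_pow_three_add_lf_mul_quad_eq hab u v w
  have hgW : lf a' b' ^ 2 * lf c' d' ∈ W := by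
    rw [← hg, ← smul_eq_C_mul]
    exact W.add_mem (W.smul_mem t hl) hqW
  refine ⟨a', b', c', d', fun hdet => ?_, hgW⟩
  obtain ⟨k, hk⟩ := exists_lf_eq_C_mul_lf hab' hdet
  obtain ⟨s, hs⟩ := hW.exists_eq_C_mul_lf_pow_three hab hl (k := k) (c := a') (d := b')
    (by rwa [hk, mul_left_comm, ← pow_succ] at hgW)
  refine one_ne_zero (LinearIndependent.pair_iff.1 hind (t - s) 1 ?_).2
  rw [sub_smul, one_smul, smul_eq_C_mul, smul_eq_C_mul, sub_add_eq_add_sub, hg, hk, ← hs]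
  ring

end IsLagrangian

/-- Every Lagrangian `W` of `V` contains a (necessarily nonzero) polynomial
of the form `(bX-aY)²(dX-cY)` with `[a:b] ≠ [c:d]` in `ℂℙ¹`, i.e. a cubic having a double
root and a distinct simple root. -/
theorem statement4 (W : Submodule ℂ P2) (hW : IsLagrangian W) :
    ∃ a b c d : ℂ, a * d - b * c ≠ 0 ∧ lf a b ^ 2 * lf c d ∈ W := by
  obtain ⟨f, hfW, hf0, hdisc⟩ := exists_mem_ne_zero_discr_toCubic_eq_zero hW.2.1
  obtain ⟨a, b, c, d, hab, rfl⟩ := exists_eq_lf_sq_mul_lf_of_discr_eq_zero (hW.1 hfW) hdisc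
  by_cases hdet : a * d - b * c = 0
  · obtain ⟨k, hk⟩ := exists_lf_eq_C_mul_lf hab hdet
    have e : lf a b ^ 2 * lf c d = k • lf a b ^ 3 := by rw [hk, smul_eq_C_mul]; ring
    rw [e] at hfW hf0
    refine hW.exists_lf_sq_mul_lf_mem_of_lf_pow_three_mem hab ?_
    simpa [left_ne_zero_of_smul hf0] using W.smul_mem k⁻¹ hfW
  · exact ⟨a, b, c, d, hdet, hfW⟩
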